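/- Let r ∈ [0,1] be fixed, let α be a strictly increasing function on (a,b), and let u be a real-valued r-balanced function on (a,b) such that du ≪ dα and du/dα is r-balanced on (a,b). If s < t are both in Z_{(a,b)}(u), then Z_{[s,t]}(du/dα) is not empty. -/

import Mathlib

open Set Filter Function MeasureTheory Topology

noncomputable section

/-- The open interval `(a,b) ⊆ ℝ` determined by extended-real endpoints `a`, `b`. -/
def EI (a b : EReal) : Set ℝ := {x : ℝ | a < (x : EReal) ∧ (x : EReal) < b}

/-- The jump `Δ_{df}(x) = f⁺(x) - f⁻(x)` of a real-valued function. -/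
def jump (f : ℝ → ℝ) (x : ℝ) : ℝ := rightLim f x - leftLim f x

/-- The jump `Δ_{df}(x) = f⁺(x) - f⁻(x)` of a complex-valued function. -/
def jumpC (f : ℝ → ℂ) (x : ℝ) : ℂ := rightLim f x - leftLim f x

/-- `θ_z(x) = 1 - z² Δ_{dα}(x) Δ_{dβ}(x)`. -/
def theta (α β : ℝ → ℝ) (z x : ℝ) : ℝ := 1 - z ^ 2 * jump α x * jump β x

/-- `ω(x) = 1 - Δ_{dα}(x) Δ_{dβ}(x) / 4`. -/
def omegaFn (α β : ℝ → ℝ) (x : ℝ) : ℝ := 1 - jump α x * jump β x / 4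

/-- A real-valued function is `r`-balanced on `I`: it is of locally bounded variation and
`f(x) = r f⁻(x) + (1-r) f⁺(x)` for all `x ∈ I`. -/
def RBalanced (r : ℝ) (I : Set ℝ) (f : ℝ → ℝ) : Prop :=
  LocallyBoundedVariationOn f I ∧
    ∀ x ∈ I, f x = r * leftLim f x + (1 - r) * rightLim f x

/-- A complex-valued function is `r`-balanced on `I`. -/
def RBalancedC (r : ℂ) (I : Set ℝ) (f : ℝ → ℂ) : Prop :=
  LocallyBoundedVariationOn f I ∧
    ∀ x ∈ I, f x = r * leftLim f x + (1 - r) * rightLim f x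

/-- `ν` coincides on `[c,d]` with the Lebesgue–Stieltjes measure `df` generated by `f`,
determined by `df((x,y]) = f⁺(y) - f⁺(x)`. -/
def SMRepresents (ν : SignedMeasure ℝ) (f : ℝ → ℝ) (c d : ℝ) : Prop :=
  ∀ x ∈ Icc c d, ∀ y ∈ Icc c d, x ≤ y → ν (Ioc x y) = rightLim f y - rightLim f x

/-- The integral of `h` against the signed measure `ν` over the set `E`. -/
def sInt (ν : SignedMeasure ℝ) (h : ℝ → ℝ) (E : Set ℝ) : ℝ :=
  (∫ x in E, h x ∂ν.toJordanDecomposition.posPart) -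
    (∫ x in E, h x ∂ν.toJordanDecomposition.negPart)

/-- The equality of (locally finite, real Borel) measures `dg = ∑ j, (h j) d(β j)` on the
interval `I`, expressed via localizations to compact subintervals of `I`. -/
def MeasureEqOn (I : Set ℝ) {ι : Type} [Fintype ι] (g : ℝ → ℝ) (h β : ι → ℝ → ℝ) : Prop :=
  ∀ c ∈ I, ∀ d ∈ I, c < d →
    ∃ (νg : SignedMeasure ℝ) (ν : ι → SignedMeasure ℝ),
      SMRepresents νg g c d ∧ (∀ j, SMRepresents (ν j) (β j) c d) ∧
      ∀ E : Set ℝ, E ⊆ Ioc c d → MeasurableSet E → νg E = ∑ j, sInt (ν j) (h j) E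

/-- The equality of complex measures `dg = ∑ j, (h j) d(β j)` on `I`, encoded via real and
imaginary parts. -/
def MeasureEqOnC (I : Set ℝ) {ι : Type} [Fintype ι] (g : ℝ → ℂ) (h β : ι → ℝ → ℂ) : Prop :=
  MeasureEqOn I (fun x => (g x).re)
    (Sum.elim (fun j x => (h j x).re) (fun j x => -(h j x).im))
    (Sum.elim (fun j x => (β j x).re) (fun j x => (β j x).im)) ∧
  MeasureEqOn I (fun x => (g x).im)
    (Sum.elim (fun j x => (h j x).im) (fun j x => (h j x).re))
    (Sum.elim (fun j x => (β j x).re) (fun j x => (β j x).im))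

/-- The support of `dα` is all of `I`: no open subinterval of `I` is `dα`-null, i.e. on no
open subinterval of `I` do all one-sided limits of `α` coincide with a single constant. -/
def SuppFull (I : Set ℝ) (α : ℝ → ℂ) : Prop :=
  ∀ x ∈ I, ∀ ε > (0 : ℝ), Icc (x - ε) (x + ε) ⊆ I →
    ¬ (∀ p ∈ Ioo (x - ε) (x + ε), ∀ q ∈ Ioo (x - ε) (x + ε),
        rightLim α p = rightLim α q ∧ leftLim α p = rightLim α q)

/-- `u`, together with the representative `w` of `du/dα`, is an `r`-balanced solution of the
homogeneous equation `-d(du/dα) + u dβ = 0` on `I`: `u` and `w` are `r`-balanced,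
`du = w dα` (so `du ≪ dα` with `du/dα = w`), and `dw = u dβ`. -/
def IsHomSol (I : Set ℝ) (r : ℝ) (α β u w : ℝ → ℝ) : Prop :=
  RBalanced r I u ∧ RBalanced r I w ∧
  MeasureEqOn I u (fun _ : Fin 1 => w) (fun _ => α) ∧
  MeasureEqOn I w (fun _ : Fin 1 => u) (fun _ => β)

/-- `u`, together with the representative `w` of `du/dα`, is an `r`-balanced solution of
`-d(du/dα) + u dβ = dη` on `I` (complex-valued coefficients): `dw = u dβ - dη`. -/
def IsSolC (I : Set ℝ) (r : ℂ) (α β η u w : ℝ → ℂ) : Prop :=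
  RBalancedC r I u ∧ RBalancedC r I w ∧
  MeasureEqOnC I u (fun _ : Fin 1 => w) (fun _ => α) ∧
  MeasureEqOnC I w ![u, fun _ => (-1 : ℂ)] ![β, η]

/-- `y` solves the linear system `dy = dφ · y + dψ` on `I`, componentwise:
`d(y i) = ∑ j, (y j) d(φ i j) + dψ i`. -/
def IsSysSolC (I : Set ℝ) (n : ℕ) (φ : ℝ → Matrix (Fin n) (Fin n) ℂ)
    (ψ : ℝ → Fin n → ℂ) (y : ℝ → Fin n → ℂ) : Prop :=
  ∀ i : Fin n,
    MeasureEqOnC I (fun x => y x i)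
      (Sum.elim (fun j : Fin n => fun x => y x j) (fun _ : Unit => fun _ => (1 : ℂ)))
      (Sum.elim (fun j : Fin n => fun x => φ x i j) (fun _ : Unit => fun x => ψ x i))

/-- `Z_I(f) = {x ∈ I : f⁻(x) f⁺(x) ≤ 0}`, the set of sign-changing points of `f` in `I`. -/
def ZSet (f : ℝ → ℝ) (I : Set ℝ) : Set ℝ := {x ∈ I | leftLim f x * rightLim f x ≤ 0}

/-- `u` changes sign at `s ∈ I`. -/
def ChangesSignAt (I : Set ℝ) (u : ℝ → ℝ) (s : ℝ) : Prop :=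
  ∃ δ > (0 : ℝ), Ioo (s - δ) (s + δ) ⊆ I ∧
    (((∀ x ∈ Ioo (s - δ) s, leftLim u x < 0) ∧ ∀ x ∈ Ioo s (s + δ), 0 < rightLim u x) ∨
     ((∀ x ∈ Ioo (s - δ) s, 0 < leftLim u x) ∧ ∀ x ∈ Ioo s (s + δ), rightLim u x < 0))

/-- `u` changes sign in `J` (a subinterval of `I`). -/
def ChangesSignIn (I : Set ℝ) (u : ℝ → ℝ) (J : Set ℝ) : Prop :=
  ∃ s ∈ J, ChangesSignAt I u s

/-- `u` and `v` are linearly dependent on `I`. -/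
def LinDepOn (I : Set ℝ) (u v : ℝ → ℝ) : Prop :=
  ∃ c₁ c₂ : ℝ, ¬(c₁ = 0 ∧ c₂ = 0) ∧ ∀ x ∈ I, c₁ * u x + c₂ * v x = 0

/-- The Lebesgue–Stieltjes measure `dg` is nonnegative on (Borel subsets of) `S`, expressed by
nonnegativity on all subintervals of `S` of each of the four kinds. -/
def PosMeasureOn (g : ℝ → ℝ) (S : Set ℝ) : Prop :=
  (∀ x y : ℝ, x ≤ y → Icc x y ⊆ S → 0 ≤ rightLim g y - leftLim g x) ∧
  (∀ x y : ℝ, x ≤ y → Ico x y ⊆ S → 0 ≤ leftLim g y - leftLim g x) ∧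
  (∀ x y : ℝ, x ≤ y → Ioc x y ⊆ S → 0 ≤ rightLim g y - rightLim g x) ∧
  (∀ x y : ℝ, x < y → Ioo x y ⊆ S → 0 ≤ leftLim g y - rightLim g x)

/-!
Suppose `w⁻ w⁺ > 0` on all of `[s, t]`. Then `w⁻`, `w⁺` and hence the balanced `w` share one
strict sign at each point of `[s, t]`, so by connectedness `w` has a constant strict sign on
`[s, t]`, and by its one-sided limits on some `(s', t]` with `s' < s`; say `w > 0`. Since `α` is
strictly increasing, `dα` charges every interval, so `du = w dα` makes `u⁺` strictly increasing
on `(s', t]`. Hence `u⁻(s) ≤ u⁺(s) < u⁻(t) ≤ u⁺(t)`, and `u⁻(s) u⁺(s) ≤ 0` forces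
`u⁻(t) u⁺(t) > 0`, contradicting `t ∈ Z(u)`.
-/

section BoundedVariation

variable {α E : Type*} [LinearOrder α] [TopologicalSpace α] [OrderTopology α]
  [EMetricSpace E] [CompleteSpace E] {f : α → E} {s : Set α} {x : α}

lemma BoundedVariationOn.tendsto_leftLim_of_mem_nhds (hf : BoundedVariationOn f s)
    (hs : s ∈ 𝓝 x) : Tendsto f (𝓝[<] x) (𝓝 (f.leftLim x)) := by
  apply tendsto_leftLim_of_tendsto
  simpa [nhdsWithin_inter_of_mem (mem_nhdsWithin_of_mem_nhds hs)] using hf.exists_tendsto_left x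

lemma BoundedVariationOn.tendsto_rightLim_of_mem_nhds (hf : BoundedVariationOn f s)
    (hs : s ∈ 𝓝 x) : Tendsto f (𝓝[>] x) (𝓝 (f.rightLim x)) := by
  apply tendsto_rightLim_of_tendsto
  simpa [nhdsWithin_inter_of_mem (mem_nhdsWithin_of_mem_nhds hs)] using hf.exists_tendsto_right x

lemma BoundedVariationOn.tendsto_rightLim_nhdsLT [(𝓝[<] x).NeBot] (hf : BoundedVariationOn f s)
    (hs : IsOpen s) (hx : x ∈ s) : Tendsto f.rightLim (𝓝[<] x) (𝓝 (f.leftLim x)) := by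
  have hrf : BoundedVariationOn f.rightLim s :=
    ((eVariationOn.eVariationOn_rightLim_le hs).trans_lt hf.lt_top).ne
  have hfx := hf.tendsto_leftLim_of_mem_nhds (hs.mem_nhds hx)
  simpa [leftLim_rightLim hfx] using hrf.tendsto_leftLim_of_mem_nhds (hs.mem_nhds hx)

end BoundedVariation

lemma LocallyBoundedVariationOn.boundedVariationOn_Icc {f : ℝ → ℝ} {I : Set ℝ} {c d : ℝ}
    (hf : LocallyBoundedVariationOn f I) (hcd : c ≤ d) (hI : Icc c d ⊆ I) :
    BoundedVariationOn f (Icc c d) := by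
  simpa [inter_eq_right.2 hI] using hf c d (hI ⟨le_rfl, hcd⟩) (hI ⟨hcd, le_rfl⟩)

lemma BoundedVariationOn.integrableOn_Icc {f : ℝ → ℝ} {c d : ℝ} (μ : Measure ℝ)
    [IsFiniteMeasureOnCompacts μ] (hf : BoundedVariationOn f (Icc c d)) :
    IntegrableOn f (Icc c d) μ := by
  obtain ⟨p, q, hp, hq, hpq⟩ := hf.locallyBoundedVariationOn.exists_monotoneOn_sub_monotoneOn
  rw [hpq]
  exact (hp.integrableOn_isCompact isCompact_Icc).sub (hq.integrableOn_isCompact isCompact_Icc)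

lemma preimage_mem_nhds_of_tendsto_nhdsLT_nhdsGT {α β : Type*} [LinearOrder α]
    [TopologicalSpace α] [OrderTopology α] [TopologicalSpace β] {f : α → β} {x : α} {l r : β}
    {V : Set β} (hl : Tendsto f (𝓝[<] x) (𝓝 l)) (hr : Tendsto f (𝓝[>] x) (𝓝 r))
    (hV : IsOpen V) (hlV : l ∈ V) (hrV : r ∈ V) (hxV : f x ∈ V) : f ⁻¹' V ∈ 𝓝 x := by
  rw [← nhdsNE_sup_pure, ← nhdsLT_sup_nhdsGT]
  exact ⟨⟨hl (hV.mem_nhds hlV), hr (hV.mem_nhds hrV)⟩, hxV⟩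

lemma Icc_subset_interior_pos_or_neg {w : ℝ → ℝ} {r s t : ℝ} (hr : r ∈ Icc (0 : ℝ) 1)
    (hbal : ∀ x ∈ Icc s t, w x = r * leftLim w x + (1 - r) * rightLim w x)
    (hl : ∀ x ∈ Icc s t, Tendsto w (𝓝[<] x) (𝓝 (leftLim w x)))
    (hr' : ∀ x ∈ Icc s t, Tendsto w (𝓝[>] x) (𝓝 (rightLim w x)))
    (hprod : ∀ x ∈ Icc s t, 0 < leftLim w x * rightLim w x) :
    Icc s t ⊆ interior {x | 0 < w x} ∨ Icc s t ⊆ interior {x | w x < 0} := by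
  refine isPreconnected_Icc.subset_or_subset isOpen_interior isOpen_interior
    ((Set.disjoint_left.2 fun y (h₁ : 0 < w y) (h₂ : w y < 0) => h₁.not_gt h₂).mono
      interior_subset interior_subset) fun x hx => ?_
  have hcomb {V : Set ℝ} (hV : Convex ℝ V) (hl0 : leftLim w x ∈ V) (hr0 : rightLim w x ∈ V) :
      w x ∈ V := by
    simpa [hbal x hx] using hV hl0 hr0 hr.1 (sub_nonneg.2 hr.2) (add_sub_cancel r 1)
  rcases mul_pos_iff.1 (hprod x hx) with ⟨hl0, hr0⟩ | ⟨hl0, hr0⟩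
  · left
    exact mem_interior_iff_mem_nhds.2 <| preimage_mem_nhds_of_tendsto_nhdsLT_nhdsGT (hl x hx)
      (hr' x hx) isOpen_Ioi hl0 hr0 (hcomb (convex_Ioi 0) hl0 hr0)
  · right
    exact mem_interior_iff_mem_nhds.2 <| preimage_mem_nhds_of_tendsto_nhdsLT_nhdsGT (hl x hx)
      (hr' x hx) isOpen_Iio hl0 hr0 (hcomb (convex_Iio 0) hl0 hr0)

lemma exists_Ioc_subset_of_Icc_subset_interior {S : Set ℝ} {c s t : ℝ} (hcs : c < s)
    (hst : s ≤ t) (h : Icc s t ⊆ interior S) : ∃ s' ∈ Ico c s, Ioc s' t ⊆ S := by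
  obtain ⟨l, hl, hlS⟩ := exists_Ioc_subset_of_mem_nhds
    (mem_interior_iff_mem_nhds.1 (h ⟨le_rfl, hst⟩)) ⟨c, hcs⟩
  refine ⟨max c l, ⟨le_max_left _ _, max_lt hcs hl⟩, fun x hx => ?_⟩
  rcases le_or_gt x s with hxs | hxs
  · exact hlS ⟨(le_max_right _ _).trans_lt hx.1, hxs⟩
  · exact interior_subset (h ⟨hxs.le, hx.2⟩)

section Monotone

variable {F : ℝ → ℝ} {a b x l : ℝ}

lemma MonotoneOn.ge_of_tendsto_nhdsLT (hF : MonotoneOn F (Ioc a b)) (hx : x ∈ Ioo a b)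
    (h : Tendsto F (𝓝[<] b) (𝓝 l)) : F x ≤ l :=
  ge_of_tendsto h <| by
    filter_upwards [Ioo_mem_nhdsLT hx.2] with y hy
    exact hF ⟨hx.1, hx.2.le⟩ ⟨hx.1.trans hy.1, hy.2.le⟩ hy.1.le

lemma MonotoneOn.le_of_tendsto_nhdsLT (hF : MonotoneOn F (Ioc a b)) (hab : a < b)
    (h : Tendsto F (𝓝[<] b) (𝓝 l)) : l ≤ F b :=
  le_of_tendsto h <| by
    filter_upwards [Ioo_mem_nhdsLT hab] with y hy
    exact hF ⟨hy.1, hy.2.le⟩ ⟨hab, le_rfl⟩ hy.2.le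

lemma StrictMonoOn.mul_pos_of_tendsto_nhdsLT {s' s t ls lt : ℝ}
    (hF : StrictMonoOn F (Ioc s' t)) (hs' : s' < s) (hst : s < t)
    (hls : Tendsto F (𝓝[<] s) (𝓝 ls)) (hlt : Tendsto F (𝓝[<] t) (𝓝 lt)) (hs : ls * F s ≤ 0) :
    0 < lt * F t := by
  have hsm : s < (s + t) / 2 := by linarith
  have hmt : (s + t) / 2 < t := by linarith
  have h₁ : ls ≤ F s := (hF.monotoneOn.mono (Ioc_subset_Ioc_right hst.le)).le_of_tendsto_nhdsLT
    hs' hls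
  have h₂ : F s < F ((s + t) / 2) := hF ⟨hs', hst.le⟩ ⟨hs'.trans hsm, hmt.le⟩ hsm
  have h₃ : F ((s + t) / 2) ≤ lt := hF.monotoneOn.ge_of_tendsto_nhdsLT ⟨hs'.trans hsm, hmt⟩ hlt
  have h₄ : lt ≤ F t := hF.monotoneOn.le_of_tendsto_nhdsLT (hs'.trans hst) hlt
  rcases lt_or_ge (F s) 0 with hneg | hnn
  · nlinarith
  · exact mul_pos (by linarith) (by linarith)

end Monotone

lemma strictMonoOn_of_sub_eq_setIntegral {F w : ℝ → ℝ} {μ : Measure ℝ} {S : Set ℝ}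
    (hS : S.OrdConnected)
    (hF : ∀ x ∈ S, ∀ y ∈ S, x ≤ y → F y - F x = ∫ z in Ioc x y, w z ∂μ)
    (hw : ∀ x ∈ S, 0 < w x) (hint : IntegrableOn w S μ)
    (hμ : ∀ x ∈ S, ∀ y ∈ S, x < y → μ (Ioc x y) ≠ 0) : StrictMonoOn F S := by
  intro x hx y hy hxy
  have hsub : Ioc x y ⊆ S := Ioc_subset_Icc_self.trans (hS.out hx hy)
  rw [← sub_pos, hF x hx y hy hxy.le,
    setIntegral_pos_iff_support_of_nonneg_ae ?_ (hint.mono_set hsub),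
    inter_eq_right.2 fun z hz => mem_support.2 (hw z (hsub hz)).ne']
  · exact pos_iff_ne_zero.2 (hμ x hx y hy hxy)
  · filter_upwards [ae_restrict_mem measurableSet_Ioc] with z hz using (hw z (hsub hz)).le

lemma mul_pos_of_sub_eq_setIntegral {F w : ℝ → ℝ} {μ : Measure ℝ} {s' s t ls lt : ℝ}
    (hs' : s' < s) (hst : s < t)
    (hF : ∀ x ∈ Ioc s' t, ∀ y ∈ Ioc s' t, x ≤ y → F y - F x = ∫ z in Ioc x y, w z ∂μ)
    (hw : (∀ x ∈ Ioc s' t, 0 < w x) ∨ ∀ x ∈ Ioc s' t, w x < 0)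
    (hint : IntegrableOn w (Ioc s' t) μ)
    (hμ : ∀ x ∈ Ioc s' t, ∀ y ∈ Ioc s' t, x < y → μ (Ioc x y) ≠ 0)
    (hls : Tendsto F (𝓝[<] s) (𝓝 ls)) (hlt : Tendsto F (𝓝[<] t) (𝓝 lt)) (hs : ls * F s ≤ 0) :
    0 < lt * F t := by
  rcases hw with hpos | hneg
  · exact (strictMonoOn_of_sub_eq_setIntegral ordConnected_Ioc hF hpos hint
      hμ).mul_pos_of_tendsto_nhdsLT hs' hst hls hlt hs
  · have hmono : StrictMonoOn (fun x => -F x) (Ioc s' t) := by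
      refine strictMonoOn_of_sub_eq_setIntegral (w := fun x => -w x) ordConnected_Ioc
        (fun x hx y hy hxy => ?_) (fun x hx => neg_pos.2 (hneg x hx)) hint.neg hμ
      rw [integral_neg, ← hF x hx y hy hxy]
      ring
    simpa using hmono.mul_pos_of_tendsto_nhdsLT hs' hst hls.neg hlt.neg (by simpa using hs)

lemma MeasureTheory.SignedMeasure.posPart_restrict_Ioc_eq_add {ν : SignedMeasure ℝ}
    {μ : Measure ℝ} [IsLocallyFiniteMeasure μ] {c t : ℝ}
    (h : ∀ x y, c ≤ x → x ≤ y → y ≤ t → ν (Ioc x y) = μ.real (Ioc x y)) :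
    ν.toJordanDecomposition.posPart.restrict (Ioc c t) =
      (ν.toJordanDecomposition.negPart + μ).restrict (Ioc c t) := by
  have key : ∀ x y, c ≤ x → y ≤ t →
      ν.toJordanDecomposition.posPart (Ioc x y) =
        (ν.toJordanDecomposition.negPart + μ) (Ioc x y) := by
    intro x y hx hy
    rcases le_or_gt x y with hxy | hxy
    · have hν := h x y hx hxy hy
      rw [apply_eq_posPart_real_sub_negPart_real ν measurableSet_Ioc, measureReal_def,
        measureReal_def, measureReal_def] at hν
      rw [Measure.add_apply, ← ENNReal.toReal_eq_toReal_iff' (measure_ne_top _ _)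
        (ENNReal.add_ne_top.2 ⟨measure_ne_top _ _, measure_Ioc_lt_top.ne⟩),
        ENNReal.toReal_add (measure_ne_top _ _) measure_Ioc_lt_top.ne]
      linarith
    · simp [Ioc_eq_empty_of_le hxy.le]
  refine Measure.ext_of_Ioc_finite _ _ ?_ fun x y _ => ?_
  · simpa only [Measure.restrict_apply_univ] using key c t le_rfl le_rfl
  · simp only [Measure.restrict_apply measurableSet_Ioc, Ioc_inter_Ioc]
    exact key _ _ le_sup_right inf_le_right

lemma sInt_eq_setIntegral {ν : SignedMeasure ℝ} {μ : Measure ℝ} {J E : Set ℝ} {w : ℝ → ℝ}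
    (hν : ν.toJordanDecomposition.posPart.restrict J =
      (ν.toJordanDecomposition.negPart + μ).restrict J) (hEJ : E ⊆ J)
    (hneg : IntegrableOn w E ν.toJordanDecomposition.negPart) (hμ : IntegrableOn w E μ) :
    sInt ν w E = ∫ x in E, w x ∂μ := by
  have hνE : ν.toJordanDecomposition.posPart.restrict E =
      ν.toJordanDecomposition.negPart.restrict E + μ.restrict E := by
    rw [← Measure.restrict_add, ← Measure.restrict_restrict_of_subset hEJ, hν,
      Measure.restrict_restrict_of_subset hEJ]
  rw [sInt, hνE, integral_add_measure hneg hμ, add_sub_cancel_left]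

lemma Monotone.rightLim_lt_rightLim_of_strictMonoOn {g : ℝ → ℝ} {S : Set ℝ} {x y : ℝ}
    (hg : Monotone g) (hgS : StrictMonoOn g S) (hxy : x < y) (hS : Ioo x y ⊆ S) :
    rightLim g x < rightLim g y := by
  obtain ⟨z, hxz, hzy⟩ := exists_between hxy
  obtain ⟨z', hzz', hz'y⟩ := exists_between hzy
  calc rightLim g x ≤ g z := hg.rightLim_le hxz
    _ < g z' := hgS (hS ⟨hxz, hzz'.trans hz'y⟩) (hS ⟨hxz.trans hzz', hz'y⟩) hzz'
    _ ≤ rightLim g y := hg.le_rightLim hz'y.le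

/-- The measure is the Lebesgue–Stieltjes measure of a monotone extension of `α|[c, d]`; it
agrees with `α` to the right of every point of `[c, d)`, hence the restriction to `t < d`. -/
lemma SMRepresents.exists_measure {ν : SignedMeasure ℝ} {α : ℝ → ℝ} {c t d : ℝ}
    (hν : SMRepresents ν α c d) (hα : StrictMonoOn α (Icc c d)) (hct : c ≤ t) (htd : t < d) :
    ∃ μ : Measure ℝ, IsLocallyFiniteMeasure μ ∧
      ν.toJordanDecomposition.posPart.restrict (Ioc c t) =
        (ν.toJordanDecomposition.negPart + μ).restrict (Ioc c t) ∧
      ∀ x y, c ≤ x → x < y → y ≤ t → μ (Ioc x y) ≠ 0 := by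
  have hcd : c ≤ d := hct.trans htd.le
  obtain ⟨g, hg, hαg⟩ := hα.monotoneOn.exists_monotone_extension
    ⟨α c, forall_mem_image.2 fun x hx => hα.monotoneOn ⟨le_rfl, hcd⟩ hx hx.1⟩
    ⟨α d, forall_mem_image.2 fun x hx => hα.monotoneOn hx ⟨hcd, le_rfl⟩ hx.2⟩
  have hrl : ∀ x, c ≤ x → x < d → rightLim α x = rightLim g x := fun x hx hxd =>
    rightLim_eq_of_tendsto <| (hg.tendsto_rightLim x).congr' <|
      ((hαg.mono (Ioo_subset_Icc_self.trans (Icc_subset_Icc_left hx))).eventuallyEq_of_mem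
        (Ioo_mem_nhdsGT hxd)).symm
  refine ⟨hg.stieltjesFunction.measure, inferInstance,
    SignedMeasure.posPart_restrict_Ioc_eq_add fun x y hx hxy hy => ?_, fun x y hx hxy hy => ?_⟩
  · rw [hν x ⟨hx, hxy.trans (hy.trans htd.le)⟩ y ⟨hx.trans hxy, hy.trans htd.le⟩ hxy,
      measureReal_def, StieltjesFunction.measure_Ioc,
      ENNReal.toReal_ofReal (sub_nonneg.2 (hg.stieltjesFunction.mono hxy)),
      hg.stieltjesFunction_eq, hg.stieltjesFunction_eq, hrl x hx (by linarith),
      hrl y (by linarith) (by linarith)]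
  · rw [StieltjesFunction.measure_Ioc, hg.stieltjesFunction_eq, hg.stieltjesFunction_eq, ne_eq,
      ENNReal.ofReal_eq_zero, not_le, sub_pos]
    exact hg.rightLim_lt_rightLim_of_strictMonoOn ((hα.congr hαg).mono Ioo_subset_Icc_self) hxy
      (Ioo_subset_Ioo hx (hy.trans htd.le))

lemma MeasureEqOn.exists_measure {I : Set ℝ} {α u w : ℝ → ℝ}
    (hdu : MeasureEqOn I u (fun _ : Fin 1 => w) (fun _ => α)) (hα : StrictMonoOn α I)
    {c t d : ℝ} (hw : BoundedVariationOn w (Icc c d)) (hct : c ≤ t) (htd : t < d)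
    (hI : Icc c d ⊆ I) :
    ∃ μ : Measure ℝ, IsLocallyFiniteMeasure μ ∧
      (∀ x y, c ≤ x → x ≤ y → y ≤ t → rightLim u y - rightLim u x = ∫ z in Ioc x y, w z ∂μ) ∧
      ∀ x y, c ≤ x → x < y → y ≤ t → μ (Ioc x y) ≠ 0 := by
  have hcd : c ≤ d := hct.trans htd.le
  obtain ⟨νu, ν, hνu, hν, hdu⟩ :=
    hdu c (hI ⟨le_rfl, hcd⟩) d (hI ⟨hcd, le_rfl⟩) (hct.trans_lt htd)
  obtain ⟨μ, hμ, hjordan, hpos⟩ := (hν 0).exists_measure (hα.mono hI) hct htd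
  refine ⟨μ, hμ, fun x y hx hxy hy => ?_, hpos⟩
  have hsub : Ioc x y ⊆ Ioc c t := Ioc_subset_Ioc hx hy
  have hsubd : Ioc x y ⊆ Icc c d :=
    hsub.trans (Ioc_subset_Icc_self.trans (Icc_subset_Icc_right htd.le))
  rw [← hνu x ⟨hx, hxy.trans (hy.trans htd.le)⟩ y ⟨hx.trans hxy, hy.trans htd.le⟩ hxy,
    hdu _ (hsub.trans (Ioc_subset_Ioc_right htd.le)) measurableSet_Ioc, Fin.sum_univ_one]
  exact sInt_eq_setIntegral hjordan hsub ((hw.integrableOn_Icc _).mono_set hsubd)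
    ((hw.integrableOn_Icc μ).mono_set hsubd)

lemma exists_Icc_subset_EI {a b : EReal} {s t : ℝ} (hs : s ∈ EI a b) (ht : t ∈ EI a b) :
    ∃ c d : ℝ, c < s ∧ t < d ∧ Icc c d ⊆ EI a b := by
  obtain ⟨c, hac, hcs⟩ := EReal.lt_iff_exists_real_btwn.1 hs.1
  obtain ⟨d, htd, hdb⟩ := EReal.lt_iff_exists_real_btwn.1 ht.2
  exact ⟨c, d, by exact_mod_cast hcs, by exact_mod_cast htd, fun x hx =>
    ⟨hac.trans_le (by exact_mod_cast hx.1), (EReal.coe_le_coe_iff.2 hx.2).trans_lt hdb⟩⟩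

theorem statement5_general (a b : EReal) (r : ℝ) (hr : r ∈ Icc (0 : ℝ) 1)
    (α u w : ℝ → ℝ) (hα : StrictMonoOn α (EI a b))
    (hu : RBalanced r (EI a b) u) (hw : RBalanced r (EI a b) w)
    (hdu : MeasureEqOn (EI a b) u (fun _ : Fin 1 => w) (fun _ => α))
    (s t : ℝ) (hst : s < t)
    (hs : s ∈ ZSet u (EI a b)) (ht : t ∈ ZSet u (EI a b)) :
    (ZSet w (Icc s t)).Nonempty := by
  by_contra hempty
  have hprod : ∀ x ∈ Icc s t, 0 < leftLim w x * rightLim w x :=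
    fun x hx => not_le.1 fun h => hempty ⟨x, hx, h⟩
  obtain ⟨c, d, hcs, htd, hI⟩ := exists_Icc_subset_EI hs.1 ht.1
  have hcd : c ≤ d := by linarith
  have hIcc : Icc s t ⊆ Icc c d := Icc_subset_Icc hcs.le htd.le
  have hnhds : ∀ x ∈ Icc s t, Ioo c d ∈ 𝓝 x := fun x hx =>
    Ioo_mem_nhds (hcs.trans_le hx.1) (hx.2.trans_lt htd)
  have huBV := (hu.1.boundedVariationOn_Icc hcd hI).mono Ioo_subset_Icc_self
  have hwBV := hw.1.boundedVariationOn_Icc hcd hI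
  obtain ⟨μ, hμ, hF, hpos⟩ := hdu.exists_measure hα hwBV (hcs.trans hst).le htd hI
  obtain ⟨s', hs', hsign⟩ : ∃ s' ∈ Ico c s,
      (∀ x ∈ Ioc s' t, 0 < w x) ∨ ∀ x ∈ Ioc s' t, w x < 0 := by
    rcases Icc_subset_interior_pos_or_neg hr (fun x hx => hw.2 x (hI (hIcc hx)))
      (fun x hx => (hwBV.mono Ioo_subset_Icc_self).tendsto_leftLim_of_mem_nhds (hnhds x hx))
      (fun x hx => (hwBV.mono Ioo_subset_Icc_self).tendsto_rightLim_of_mem_nhds (hnhds x hx))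
      hprod with h | h <;>
    obtain ⟨s', hs', h'⟩ := exists_Ioc_subset_of_Icc_subset_interior hcs hst.le h
    exacts [⟨s', hs', Or.inl h'⟩, ⟨s', hs', Or.inr h'⟩]
  have hsub : Ioc s' t ⊆ Icc c d := fun x hx => ⟨hs'.1.trans hx.1.le, hx.2.trans htd.le⟩
  have hls := huBV.tendsto_rightLim_nhdsLT isOpen_Ioo ⟨hcs, hst.trans htd⟩
  have hlt := huBV.tendsto_rightLim_nhdsLT isOpen_Ioo ⟨hcs.trans hst, htd⟩
  have hut : 0 < leftLim u t * rightLim u t :=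
    mul_pos_of_sub_eq_setIntegral hs'.2 hst
      (fun x hx y hy hxy => hF x y (hs'.1.trans hx.1.le) hxy hy.2) hsign
      ((hwBV.integrableOn_Icc μ).mono_set hsub)
      (fun x hx y hy hxy => hpos x y (hs'.1.trans hx.1.le) hxy hy.2) hls hlt hs.2
  exact hut.not_ge ht.2

/-- Mean Value Theorem 4.3: if `s < t` both lie in `Z_{(a,b)}(u)` then
`Z_{[s,t]}(du/dα)` is nonempty. -/
theorem statement5 (a b : EReal) (hab : a < b) (r : ℝ) (hr : r ∈ Icc (0 : ℝ) 1)
    (α u w : ℝ → ℝ) (hα : StrictMonoOn α (EI a b))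
    (hu : RBalanced r (EI a b) u) (hw : RBalanced r (EI a b) w)
    (hdu : MeasureEqOn (EI a b) u (fun _ : Fin 1 => w) (fun _ => α))
    (s t : ℝ) (hst : s < t)
    (hs : s ∈ ZSet u (EI a b)) (ht : t ∈ ZSet u (EI a b)) :
    (ZSet w (Icc s t)).Nonempty :=
  statement5_general a b r hr α u w hα hu hw hdu s t hst hs ht
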